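/- arXiv:2101.07777 — 2 statements merged into one kernel-verified Lean document; each statement's English description precedes it below -/
import Mathlib

section
/- Let X be a category with finite coproducts, regarded as a monoidal category under binary coproduct with unit the initial object, and let F : X ⥤ Cat be a functor equipped with a lax monoidal structure (with Cat carrying its cartesian monoidal structure). Then every reindexing functor strictly preserves the fibrewise monoidal structure: for every morphism f : x ⟶ y of X and all objects a, b of F(x), (F.map f).obj (a ⊗ₓ b) = ((F.map f).obj a) ⊗_y ((F.map f).obj b), and (F.map f).obj I_x = I_y. -/
open CategoryTheory CategoryTheory.Limits

universe w z v u

variable {X : Type u} [Category.{v} X] [HasFiniteCoproducts X]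

/-- A lax monoidal structure on a functor `F : X ⥤ Cat`, where `X` carries the cocartesian
monoidal structure given by binary coproducts with unit an initial object, and `Cat` carries
its cartesian monoidal structure.  It consists of laxator functors
`μ x y : F(x) × F(y) ⥤ F(x ⨿ y)`, natural in `x` and `y`, and a unit functor
`ε : 𝟙_Cat ⥤ F(⊥)` from the terminal category, satisfying the lax associativity and unit
axioms. -/
structure CoprodLaxMonoidalStructure (F : X ⥤ Cat.{w, z}) where
  /-- The laxator. -/
  μ : ∀ x y : X, (↑(F.obj x) × ↑(F.obj y)) ⥤ ↑(F.obj (x ⨿ y))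
  /-- The unit laxator, a functor from the terminal category. -/
  ε : Discrete PUnit.{1} ⥤ ↑(F.obj (⊥_ X))
  /-- Naturality of the laxator in both variables. -/
  naturality : ∀ {x x' y y' : X} (f : x ⟶ x') (g : y ⟶ y'),
    (F.map f).toFunctor.prod (F.map g).toFunctor ⋙ μ x' y' = μ x y ⋙ (F.map (coprod.map f g)).toFunctor
  /-- The lax associativity axiom. -/
  associativity : ∀ x y z : X,
    (μ x y).prod (𝟭 ↑(F.obj z)) ⋙ μ (x ⨿ y) z ⋙ (F.map (coprod.associator x y z).hom).toFunctor
      = prod.associator ↑(F.obj x) ↑(F.obj y) ↑(F.obj z) ⋙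
          (𝟭 ↑(F.obj x)).prod (μ y z) ⋙ μ x (y ⨿ z)
  /-- The lax left unit axiom. -/
  left_unitality : ∀ x : X,
    Prod.sectR (ε.obj ⟨PUnit.unit⟩) ↑(F.obj x) ⋙ μ (⊥_ X) x ⋙
        (F.map (coprod.desc (initial.to x) (𝟙 x))).toFunctor
      = 𝟭 ↑(F.obj x)
  /-- The lax right unit axiom. -/
  right_unitality : ∀ x : X,
    Prod.sectL ↑(F.obj x) (ε.obj ⟨PUnit.unit⟩) ⋙ μ x (⊥_ X) ⋙
        (F.map (coprod.desc (𝟙 x) (initial.to x))).toFunctor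
      = 𝟭 ↑(F.obj x)

/-- The fibrewise tensor product induced on the fibre `F(x)` by a lax monoidal structure on
`F : X ⥤ Cat`:  `a ⊗ₓ b = F(∇_x)(μ x x (a, b))`, where `∇_x : x ⨿ x ⟶ x` is the codiagonal. -/
noncomputable def fibTensor (F : X ⥤ Cat.{w, z}) (L : CoprodLaxMonoidalStructure F) {x : X}
    (a b : ↑(F.obj x)) : ↑(F.obj x) :=
  (F.map (codiag x)).toFunctor.obj ((L.μ x x).obj (a, b))

/-- The fibrewise unit induced on the fibre `F(x)` by a lax monoidal structure on `F : X ⥤ Cat`: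
`I_x = F(i_x)(ε(⋆))`, where `i_x : ⊥ ⟶ x` is the unique map from the initial object. -/
noncomputable def fibUnit (F : X ⥤ Cat.{w, z}) (L : CoprodLaxMonoidalStructure F) (x : X) : ↑(F.obj x) :=
  (F.map (initial.to x)).toFunctor.obj (L.ε.obj ⟨PUnit.unit⟩)

namespace CoprodLaxMonoidalStructure

variable {F : X ⥤ Cat.{w, z}} (L : CoprodLaxMonoidalStructure F)

lemma map_coprodMap_obj_μ {x x' y y' : X} (f : x ⟶ x') (g : y ⟶ y') (a : F.obj x) (b : F.obj y) :
    (F.map (coprod.map f g)).toFunctor.obj ((L.μ x y).obj (a, b)) =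
      (L.μ x' y').obj ((F.map f).toFunctor.obj a, (F.map g).toFunctor.obj b) :=
  (Functor.congr_obj (L.naturality f g) (a, b)).symm

lemma map_obj_fibTensor {x y : X} (f : x ⟶ y) (a b : F.obj x) :
    (F.map f).toFunctor.obj (fibTensor F L a b) =
      fibTensor F L ((F.map f).toFunctor.obj a) ((F.map f).toFunctor.obj b) := by
  rw [fibTensor, fibTensor, ← L.map_coprodMap_obj_μ, ← Cat.Hom.comp_obj, ← Cat.Hom.comp_obj,
    ← F.map_comp, ← F.map_comp, coprod.map_codiag]

lemma map_obj_fibUnit {x y : X} (f : x ⟶ y) :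
    (F.map f).toFunctor.obj (fibUnit F L x) = fibUnit F L y := by
  rw [fibUnit, fibUnit, ← Cat.Hom.comp_obj, ← F.map_comp, initial.to_comp]

end CoprodLaxMonoidalStructure

/-- **Reindexing functors strictly preserve the fibrewise monoidal structure.**
For a functor `F : X ⥤ Cat` from a category with finite coproducts, equipped with a lax
monoidal structure with respect to the cocartesian monoidal structure on `X` and the cartesian
monoidal structure on `Cat`, every reindexing functor `F.map f` strictly preserves the
fibrewise tensor product and unit:
`F(f)(a ⊗ₓ b) = F(f)(a) ⊗_y F(f)(b)` and `F(f)(I_x) = I_y`. -/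
theorem fibTensor_map (F : X ⥤ Cat.{w, z}) (L : CoprodLaxMonoidalStructure F) {x y : X}
    (f : x ⟶ y) (a b : ↑(F.obj x)) :
    (F.map f).toFunctor.obj (fibTensor F L a b)
        = fibTensor F L ((F.map f).toFunctor.obj a) ((F.map f).toFunctor.obj b) ∧
      (F.map f).toFunctor.obj (fibUnit F L x) = fibUnit F L y := by
  exact ⟨L.map_obj_fibTensor f a b, L.map_obj_fibUnit f⟩
end

section
/- A morphism φ : G ⟶ H in the category of quivers is strongly cocartesian with respect to the vertex functor V : Quiv ⥤ Type (i.e. cocartesian in the sense of Grothendieck opfibrations, lying over its own vertex map) if and only if φ is bijective on edges, i.e. the induced map on total edge sets Σ (a b : vertices of G), (a ⟶ b) → Σ (a' b' : vertices of H), (a' ⟶ b') sending (a, b, e) to (φ.obj a, φ.obj b, φ.map e) is a bijection. -/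
/-! A prefunctor `H ⥤q K` over a vertex map `g` amounts to a map between the sets of arrows
`Σ a b, a ⟶ b` lying over `g` on sources and targets, and precomposing with `φ` precomposes
this map with the arrow map `f` of `φ`. If `f` is bijective, the factorisations through `φ`
therefore exist and are unique. Conversely, take `K` to be the vertices of `H` with every
hom-set a fixed nontrivial type `E`: prefunctors `H ⥤q K` over the identity are exactly
functions from the arrows of `H` to `E`, so uniqueness makes `(· ∘ f)` injective, forcing `f`
to be surjective, and existence makes it surjective, forcing `f` to be injective. -/

open CategoryTheory

universe v u

/-- The vertex functor `V : Quiv ⥤ Type`, sending a quiver to its type of vertices and a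
prefunctor to its underlying map on vertices. -/
def Quiv.vertexFunctor : Quiv.{v, u} ⥤ Type u where
  obj G := G
  map φ := TypeCat.ofHom φ.obj
  map_id _ := rfl
  map_comp _ _ := rfl

open Function

namespace Quiver

abbrev Arrows (V : Type*) [Quiver V] := Σ a b : V, a ⟶ b

def Complete (α : Type u) (_E : Type v) : Type u := α

instance (α : Type u) (E : Type v) : Quiver.{v} (Complete α E) := ⟨fun _ _ => E⟩

theorem arrows_mk_homOfEq {V : Type*} [Quiver V] {X Y X' Y' : V} (f : X ⟶ Y) (hX : X = X')
    (hY : Y = Y') : (⟨X', Y', homOfEq f hX hY⟩ : Arrows V) = ⟨X, Y, f⟩ := by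
  subst hX hY
  rfl

end Quiver

open Quiver

namespace Prefunctor

variable {U V W : Type*} [Quiver U] [Quiver V] [Quiver W]

def mapArrows (F : V ⥤q W) (p : Arrows V) : Arrows W := ⟨F.obj p.1, F.obj p.2.1, F.map p.2.2⟩

theorem mapArrows_comp (F : U ⥤q V) (G : V ⥤q W) :
    (F ⋙q G).mapArrows = G.mapArrows ∘ F.mapArrows := rfl

theorem ext_of_mapArrows {F G : V ⥤q W} (hobj : F.obj = G.obj)
    (hmap : F.mapArrows = G.mapArrows) : F = G := by
  obtain ⟨Fobj, Fmap⟩ := F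
  obtain ⟨Gobj, Gmap⟩ := G
  subst hobj
  congr
  funext a b e
  have h := congrFun hmap ⟨a, b, e⟩
  simp only [mapArrows, Sigma.mk.injEq, heq_eq_eq, true_and] at h
  exact h

theorem eq_of_comp_eq {F : U ⥤q V} (hF : Surjective F.mapArrows) {χ₁ χ₂ : V ⥤q W}
    (hobj : χ₁.obj = χ₂.obj) (hcomp : F ⋙q χ₁ = F ⋙q χ₂) : χ₁ = χ₂ :=
  ext_of_mapArrows hobj (hF.injective_comp_right (congrArg mapArrows hcomp))

def ofMapArrows (g : V → W) (m : Arrows V → Arrows W) (hsrc : ∀ p, (m p).1 = g p.1)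
    (htgt : ∀ p, (m p).2.1 = g p.2.1) : V ⥤q W where
  obj := g
  map {a b} e := homOfEq (m ⟨a, b, e⟩).2.2 (hsrc _) (htgt _)

theorem mapArrows_ofMapArrows (g : V → W) (m : Arrows V → Arrows W)
    (hsrc : ∀ p, (m p).1 = g p.1) (htgt : ∀ p, (m p).2.1 = g p.2.1) :
    (ofMapArrows g m hsrc htgt).mapArrows = m := by
  funext p
  exact arrows_mk_homOfEq _ _ _

theorem exists_comp_eq_of_bijective {F : U ⥤q V} (hF : Bijective F.mapArrows) (ψ : U ⥤q W)
    (g : V → W) (hg : g ∘ F.obj = ψ.obj) :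
    ∃ χ : V ⥤q W, χ.obj = g ∧ F ⋙q χ = ψ := by
  let e := Equiv.ofBijective _ hF
  have hsrc (q : Arrows V) : (ψ.mapArrows (e.symm q)).1 = g q.1 :=
    (congrFun hg _).symm.trans (congrArg (g ∘ Sigma.fst) (e.apply_symm_apply q))
  have htgt (q : Arrows V) : (ψ.mapArrows (e.symm q)).2.1 = g q.2.1 :=
    (congrFun hg _).symm.trans (congrArg (fun q : Arrows V => g q.2.1) (e.apply_symm_apply q))
  refine ⟨ofMapArrows g (ψ.mapArrows ∘ e.symm) hsrc htgt, rfl, ext_of_mapArrows hg ?_⟩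
  rw [mapArrows_comp, mapArrows_ofMapArrows]
  funext p
  exact congrArg ψ.mapArrows (e.symm_apply_apply p)

end Prefunctor

namespace Quiver.Complete

variable {U V : Type*} [Quiver U] [Quiver V] {α : Type*} {E : Type*}

def lift (g : V → α) (c : Arrows V → E) : V ⥤q Complete α E where
  obj := g
  map {a b} e := c ⟨a, b, e⟩

theorem comp_lift (F : U ⥤q V) (g : V → α) (c : Arrows V → E) :
    F ⋙q lift g c = lift (g ∘ F.obj) (c ∘ F.mapArrows) := rfl

theorem lift_injective (g : V → α) : Injective (lift (E := E) g) := by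
  intro c d h
  funext ⟨a, b, e⟩
  exact congrArg (fun χ : V ⥤q Complete α E => (χ.map e : E)) h

theorem eq_lift (χ : V ⥤q Complete α E) :
    χ = lift χ.obj fun p : Arrows V => (χ.map p.2.2 : E) :=
  rfl

end Quiver.Complete

namespace Prefunctor

open Quiver.Complete

variable {V W : Type*} [Quiver V] [Quiver W] {α E : Type*} [Nontrivial E]

theorem injective_mapArrows_of_forall_exists (F : V ⥤q W) (g : W → α)
    (h : ∀ ψ : V ⥤q Complete α E, ψ.obj = g ∘ F.obj →
      ∃ χ : W ⥤q Complete α E, χ.obj = g ∧ F ⋙q χ = ψ) :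
    Injective F.mapArrows := by
  rw [← surjective_comp_right_iff_injective (γ := E)]
  intro c
  obtain ⟨χ, hχ, hcomp⟩ := h (lift (g ∘ F.obj) c) rfl
  refine ⟨fun q : Arrows W => (χ.map q.2.2 : E), lift_injective (g ∘ F.obj) ?_⟩
  rw [← hcomp, eq_lift χ, hχ]
  exact (comp_lift F g _).symm

theorem surjective_mapArrows_of_forall_eq (F : V ⥤q W)
    (h : ∀ χ₁ χ₂ : W ⥤q Complete W E,
      χ₁.obj = χ₂.obj → F ⋙q χ₁ = F ⋙q χ₂ → χ₁ = χ₂) :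
    Surjective F.mapArrows := by
  rw [← injective_comp_right_iff_surjective (γ := E)]
  intro c d hcd
  refine lift_injective _root_.id (h _ _ rfl ?_)
  rw [comp_lift, comp_lift]
  exact congrArg _ hcd

end Prefunctor

namespace CategoryTheory.Functor

variable {𝒮 𝒳 : Type*} [Category 𝒮] [Category 𝒳] (p : 𝒳 ⥤ 𝒮)

theorem isHomLift_iff_map_eq {a b : 𝒳} (f : p.obj a ⟶ p.obj b) (φ : a ⟶ b) :
    p.IsHomLift f φ ↔ p.map φ = f :=
  ⟨fun _ => (IsHomLift.eq_of_isHomLift p f φ).symm, fun h => h ▸ IsHomLift.map φ⟩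

theorem isStronglyCocartesian_map_iff {a b : 𝒳} (φ : a ⟶ b) :
    p.IsStronglyCocartesian (p.map φ) φ ↔
      ∀ (b' : 𝒳) (g : p.obj b ⟶ p.obj b') (φ' : a ⟶ b'), p.map φ ≫ g = p.map φ' →
        ∃! χ : b ⟶ b', p.map χ = g ∧ φ ≫ χ = φ' := by
  constructor
  · intro h b' g φ' hφ'
    have : p.IsHomLift (p.map φ ≫ g) φ' := (isHomLift_iff_map_eq p _ φ').2 hφ'.symm
    simpa only [isHomLift_iff_map_eq] using h.universal_property' g φ'
  · refine fun h => ⟨fun g φ' _ => ?_⟩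
    simpa only [isHomLift_iff_map_eq] using h _ g φ' (IsHomLift.eq_of_isHomLift p _ φ')

end CategoryTheory.Functor

namespace Quiv

theorem vertexFunctor_map_eq_iff {G H : Quiv.{v, u}} (χ : G ⟶ H)
    (g : vertexFunctor.obj G ⟶ vertexFunctor.obj H) :
    vertexFunctor.map χ = g ↔ χ.obj = TypeCat.homEquiv g :=
  TypeCat.homEquiv.symm_apply_eq

theorem isStronglyCocartesian_vertexFunctor_iff {G H : Quiv.{v, u}} (φ : G ⟶ H) :
    vertexFunctor.IsStronglyCocartesian (vertexFunctor.map φ) φ ↔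
      ∀ (K : Quiv.{v, u}) (ψ : G ⟶ K) (g : H → K), g ∘ φ.obj = ψ.obj →
        ∃! χ : H ⟶ K, χ.obj = g ∧ φ ≫ χ = ψ := by
  rw [Functor.isStronglyCocartesian_map_iff]
  refine forall_congr' fun K => forall_comm.trans <| forall_congr' fun ψ =>
    TypeCat.homEquiv.forall_congr fun g => ?_
  simp only [vertexFunctor_map_eq_iff]
  exact imp_congr_left ((eq_comm.trans (vertexFunctor_map_eq_iff ψ _)).trans eq_comm)

end Quiv

/-- **Characterization of strongly cocartesian morphisms of quivers over the vertex functor.**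
A morphism `φ : G ⟶ H` of quivers is strongly cocartesian with respect to the vertex functor
`V : Quiv ⥤ Type`, lying over its own vertex map, if and only if `φ` is bijective on edges,
i.e. the induced map on total edge sets
`Σ (a b : G), (a ⟶ b) → Σ (a' b' : H), (a' ⟶ b')` is a bijection. -/
theorem Quiv.isStronglyCocartesian_iff {G H : Quiv.{v, u}} (φ : G ⟶ H) :
    Quiv.vertexFunctor.IsStronglyCocartesian (Quiv.vertexFunctor.map φ) φ ↔
      Function.Bijective
        (fun p : Σ a b : G, a ⟶ b =>
          (⟨φ.obj p.1, φ.obj p.2.1, φ.map p.2.2⟩ : Σ a' b' : H, a' ⟶ b')) := by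
  rw [isStronglyCocartesian_vertexFunctor_iff]
  refine ⟨fun h => ?_, fun hφ K ψ g hg => ?_⟩
  · let K : Quiv.{v, u} := .of (Complete H (ULift.{v} Bool))
    exact ⟨Prefunctor.injective_mapArrows_of_forall_exists φ id fun ψ hψ =>
        (h K ψ id hψ.symm).exists,
      Prefunctor.surjective_mapArrows_of_forall_eq φ fun χ₁ χ₂ hobj hcomp =>
        (h K (φ ≫ χ₁) χ₁.obj rfl).unique ⟨rfl, rfl⟩ ⟨hobj.symm, hcomp.symm⟩⟩
  · obtain ⟨χ, hχ⟩ := Prefunctor.exists_comp_eq_of_bijective hφ ψ g hg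
    exact ⟨χ, hχ, fun χ' hχ' =>
      Prefunctor.eq_of_comp_eq hφ.2 (hχ'.1.trans hχ.1.symm) (hχ'.2.trans hχ.2.symm)⟩
end
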